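/- arXiv:1910.00904 — 4 statements merged into one kernel-verified Lean document; each statement's English description precedes it below -/
import Mathlib

section
/- Let L/K be a finite extension of fields and V a finite-dimensional L-vector space. For every L-linear endomorphism f of V, the determinant of f viewed as a K-linear endomorphism of V equals N_{L/K}(det_L f), the field norm from L to K of the determinant of f as an L-linear endomorphism. -/
theorem det_restrictScalars_eq_norm_det_general
    (K L V : Type*) [Field K] [Field L] [Algebra K L]
    [AddCommGroup V] [Module L V]
    [Module K V] [IsScalarTower K L V]
    (f : V →ₗ[L] V) :
    LinearMap.det (f.restrictScalars K) = Algebra.norm K (LinearMap.det f) :=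
  LinearMap.det_restrictScalars

theorem det_restrictScalars_eq_norm_det
    (K L V : Type*) [Field K] [Field L] [Algebra K L] [FiniteDimensional K L]
    [AddCommGroup V] [Module L V] [FiniteDimensional L V]
    [Module K V] [IsScalarTower K L V]
    (f : V →ₗ[L] V) :
    LinearMap.det (f.restrictScalars K) = Algebra.norm K (LinearMap.det f) :=
  det_restrictScalars_eq_norm_det_general K L V f
end

section
/- Let S be a finite set of primes and A ∈ GL_m(ℤ[1/S]), and suppose that for every p ∈ S and a fixed embedding ℚ̄ ↪ ℂ_p, every eigenvalue λ of A satisfies |λ|_p ≠ 1. Then ℤ[1/S]^m, regarded as a module over ℤ[t^{±1}] with t acting as A, is a finitely generated ℤ[t^{±1}]-module; moreover, for every p ∈ S the Pontryagin dual X = Σ_S^m = (ℤ[1/S]^m)^∧ has bounded p-torsion (i.e. the ℤ-action on Σ_S^m induced by A is p-adically expansive). -/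
open Polynomial

/-- The ring ℤ[1/S] of S-integers of ℚ: the subring of ℚ generated by the
inverses of the primes in S (it automatically contains ℤ). -/
def ZinvS (S : Finset ℕ) : Subring ℚ :=
  Subring.closure {x : ℚ | ∃ l ∈ S, x = (l : ℚ)⁻¹}

/-- An invertible matrix over a commutative ring `R`, viewed as an invertible
additive (ℤ-linear) endomorphism of `Fin m → R`. -/
noncomputable def matUnitEnd {R : Type*} [CommRing R] {m : ℕ}
    (A : (Matrix (Fin m) (Fin m) R)ˣ) : (Module.End ℤ (Fin m → R))ˣ :=
  Units.map
    { toFun := fun B : Matrix (Fin m) (Fin m) R => (Matrix.mulVecLin B).restrictScalars ℤ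
      map_one' := by ext x; simp
      map_mul' := fun B C => by ext x; simp [Matrix.mulVecLin_mul] } A

/-- The ℤ[t^{±1}] = ℤ[ℤ]-module structure on `Fin m → R` in which `t` acts as an
invertible matrix `A`, i.e. `(∑ cᵢ tⁱ) • x = ∑ cᵢ Aⁱ x`.  Here ℤ[t^{±1}] is
represented as the group algebra `AddMonoidAlgebra ℤ ℤ`. -/
noncomputable def laurentModule {R : Type*} [CommRing R] {m : ℕ}
    (A : (Matrix (Fin m) (Fin m) R)ˣ) : Module (AddMonoidAlgebra ℤ ℤ) (Fin m → R) :=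
  Module.compHom (Fin m → R)
    ((AddMonoidAlgebra.lift ℤ (Module.End ℤ (Fin m → R)) ℤ)
      ((Units.coeHom _).comp ((zpowersHom _) (matUnitEnd A)))).toRingHom

/-!
For `p ∈ S` the eigenvalue condition gives the characteristic polynomial of `A` a strictly
dominant `p`-adic coefficient: if `k` eigenvalues satisfy `|λ|_p > 1`, the coefficient of
`X^(m-k)` has absolute value the product of those `|λ|_p` and all others are strictly smaller.
Rescaling it and clearing denominators prime to `p` yields `N A^i + p H(A) = 0` with `p ∤ N`,
so `p` is invertible in the image of `ℤ[t^{±1}]`. The `ℤ[t^{±1}]`-span of `ℤ^m` is therefore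
stable under division by every `p ∈ S`, hence is all of `ℤ[1/S]^m`. Since `ℤ[1/S]^m` is
`p`-divisible, its dual has no `p`-torsion at all.
-/

open scoped LaurentPolynomial

namespace Polynomial

def IsDominantCoeff {R S : Type*} [Semiring R] [Preorder S] (v : R → S) (f : R[X]) (i : ℕ) :
    Prop :=
  ∀ j ≠ i, v (f.coeff j) < v (f.coeff i)

theorem IsDominantCoeff.le {R S : Type*} [Semiring R] [Preorder S] {v : R → S} {f : R[X]} {i : ℕ}
    (hf : IsDominantCoeff v f i) (j : ℕ) : v (f.coeff j) ≤ v (f.coeff i) := by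
  rcases eq_or_ne j i with rfl | hj
  · exact le_rfl
  · exact (hf j hj).le

section AbsoluteValue

variable {R : Type*} [CommRing R] {v : AbsoluteValue R ℝ} {f : R[X]} {i : ℕ}

theorem IsDominantCoeff.pos (hf : IsDominantCoeff v f i) : 0 < v (f.coeff i) :=
  (v.nonneg _).trans_lt (hf (i + 1) (by omega))

theorem IsDominantCoeff.add_of_lt (hv : IsNonarchimedean v) (hf : IsDominantCoeff v f i)
    {g : R[X]} (hg : ∀ j, v (g.coeff j) < v (f.coeff i)) : IsDominantCoeff v (f + g) i := by
  intro j hj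
  rw [coeff_add, coeff_add, hv.add_eq_left_of_lt (hg i)]
  exact (hv _ _).trans_lt (max_lt (hf j hj) (hg j))

theorem IsDominantCoeff.X_mul (hf : IsDominantCoeff v f i) :
    IsDominantCoeff v (X * f) (i + 1) := by
  intro j hj
  rw [coeff_X_mul]
  cases j with
  | zero => simpa using hf.pos
  | succ j => rw [coeff_X_mul]; exact hf j (by omega)

theorem IsDominantCoeff.C_mul (hf : IsDominantCoeff v f i) {a : R} (ha : a ≠ 0) :
    IsDominantCoeff v (C a * f) i := by
  intro j hj
  simp only [coeff_C_mul, v.map_mul]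
  exact mul_lt_mul_of_pos_left (hf j hj) (v.pos ha)

/-- The dominant index moves up by one when `v a < 1` and stays put when `v a > 1`. -/
theorem IsDominantCoeff.exists_X_sub_C_mul (hv : IsNonarchimedean v)
    (hf : IsDominantCoeff v f i) {a : R} (ha : v a ≠ 1) :
    ∃ i', IsDominantCoeff v ((X - C a) * f) i' := by
  have hsplit : (X - C a) * f = X * f + C (-a) * f := by rw [C_neg]; ring
  rcases ha.lt_or_gt with ha | ha
  · refine ⟨i + 1, hsplit ▸ hf.X_mul.add_of_lt hv fun j => ?_⟩
    rw [coeff_X_mul, coeff_C_mul, v.map_mul, v.map_neg]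
    calc v a * v (f.coeff j) ≤ v a * v (f.coeff i) := by gcongr; exact hf.le j
      _ < v (f.coeff i) := mul_lt_of_lt_one_left hf.pos ha
  · have ha0 : -a ≠ 0 := neg_ne_zero.2 fun h => by rw [h, map_zero] at ha; linarith
    refine ⟨i, hsplit ▸ add_comm (C (-a) * f) (X * f) ▸ (hf.C_mul ha0).add_of_lt hv fun j => ?_⟩
    rw [coeff_C_mul, v.map_mul, v.map_neg]
    calc v ((X * f).coeff j) ≤ v (f.coeff i) := by simpa using hf.X_mul.le j
      _ < v a * v (f.coeff i) := lt_mul_of_one_lt_left hf.pos ha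

theorem exists_isDominantCoeff_prod_X_sub_C [Nontrivial R] (hv : IsNonarchimedean v)
    (s : Multiset R) (hs : ∀ a ∈ s, v a ≠ 1) :
    ∃ i, IsDominantCoeff v (s.map (X - C ·)).prod i := by
  induction s using Multiset.induction_on with
  | empty => exact ⟨0, fun j hj => by simp [coeff_one, hj]⟩
  | cons a s ih =>
    obtain ⟨i, hi⟩ := ih fun b hb => hs b (Multiset.mem_cons_of_mem hb)
    simpa using hi.exists_X_sub_C_mul hv (hs a (Multiset.mem_cons_self a s))

end AbsoluteValue

theorem Monic.exists_isDominantCoeff {K : Type*} [Field K] {v : AbsoluteValue K ℝ}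
    (hv : IsNonarchimedean v) {f : K[X]} (hf : f.Monic) (hsplit : f.Splits)
    (hroots : ∀ a, f.IsRoot a → v a ≠ 1) : ∃ i, IsDominantCoeff v f i := by
  rw [hsplit.eq_prod_roots_of_monic hf]
  exact exists_isDominantCoeff_prod_X_sub_C hv _ fun a ha => hroots a (isRoot_of_mem_roots ha)

end Polynomial

theorem padicNorm.not_dvd_den_of_le_one {p : ℕ} [Fact p.Prime] {q : ℚ} (hq : padicNorm p q ≤ 1) :
    ¬ p ∣ q.den := by
  intro hden
  have hnum : ¬ (p : ℤ) ∣ q.num := fun hnum =>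
    (Fact.out : p.Prime).one_lt.ne' <| Nat.dvd_one.mp <| q.reduced ▸
      Nat.dvd_gcd (Int.natCast_dvd.mp hnum) hden
  have hden_pos : 0 < padicNorm p q.den := (padicNorm.nonneg _).lt_of_ne'
    (padicNorm.nonzero (by exact_mod_cast q.den_nz))
  have hden_lt : padicNorm p q.den < 1 := (padicNorm.nat_lt_one_iff _).2 hden
  rw [← q.num_div_den, padicNorm.div, (padicNorm.int_eq_one_iff _).2 hnum,
    one_div, inv_le_one₀ hden_pos] at hq
  linarith

theorem Polynomial.exists_intCast_mul_mem_lifts_of_padicNorm_le_one {p : ℕ} [Fact p.Prime]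
    (g : ℚ[X]) (hg : ∀ j, padicNorm p (g.coeff j) ≤ 1) :
    ∃ N : ℤ, ¬ (p : ℤ) ∣ N ∧ C (N : ℚ) * g ∈ lifts (Int.castRingHom ℚ) := by
  refine ⟨∏ j ∈ g.support, ((g.coeff j).den : ℤ), fun hdvd => ?_, ?_⟩
  · obtain ⟨j, -, hj⟩ := (Nat.prime_iff_prime_int.mp Fact.out).exists_mem_finset_dvd hdvd
    exact padicNorm.not_dvd_den_of_le_one (hg j) (Int.natCast_dvd_natCast.mp hj)
  · refine (lifts_iff_coeff_lifts _).2 fun j => ?_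
    rw [coeff_C_mul]
    by_cases hj : j ∈ g.support
    · refine ⟨(g.coeff j).num * ∏ k ∈ g.support.erase j, ((g.coeff k).den : ℤ), ?_⟩
      rw [← Finset.mul_prod_erase _ _ hj, eq_intCast, Int.cast_mul, ← Rat.mul_den_eq_num]
      push_cast
      ring
    · exact ⟨0, by simp [notMem_support_iff.mp hj]⟩

theorem Polynomial.IsDominantCoeff.exists_coprime_relation {p : ℕ} [Fact p.Prime] {f : ℚ[X]}
    {i : ℕ} (hf : IsDominantCoeff (padicNorm p) f i) :
    ∃ (N : ℤ) (H : ℤ[X]) (c : ℚ), IsCoprime (p : ℤ) N ∧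
      (C N * X ^ i + C (p : ℤ) * H).map (Int.castRingHom ℚ) = C c * f := by
  set c₀ := f.coeff i
  have hpos : 0 < padicNorm p c₀ := (padicNorm.nonneg _).trans_lt (hf (i + 1) (by omega))
  have hc₀ : c₀ ≠ 0 := fun h => hpos.ne' (by rw [h, padicNorm.zero])
  obtain ⟨N, hN, G, hG⟩ : ∃ N : ℤ, ¬ (p : ℤ) ∣ N ∧
      ∃ G : ℤ[X], G.map (Int.castRingHom ℚ) = C (N : ℚ) * (C c₀⁻¹ * f) := by
    obtain ⟨N, hN, hlift⟩ :=
      exists_intCast_mul_mem_lifts_of_padicNorm_le_one (p := p) (C c₀⁻¹ * f) fun j => by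
        rw [coeff_C_mul, inv_mul_eq_div, padicNorm.div, div_le_one hpos]
        exact hf.le j
    exact ⟨N, hN, (mem_lifts _).1 hlift⟩
  have hGcoeff (j : ℕ) : (G.coeff j : ℚ) = N * (f.coeff j / c₀) := by
    simpa [coeff_map, inv_mul_eq_div] using congr_arg (coeff · j) hG
  have hGi : G.coeff i = N := by
    have : (G.coeff i : ℚ) = N := by rw [hGcoeff, div_self hc₀, mul_one]
    exact_mod_cast this
  have hGj (j : ℕ) (hj : j ≠ i) : (p : ℤ) ∣ G.coeff j := by
    rw [← padicNorm.int_lt_one_iff, hGcoeff, padicNorm.mul, (padicNorm.int_eq_one_iff N).2 hN,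
      one_mul, padicNorm.div, div_lt_one hpos]
    exact hf j hj
  obtain ⟨H, hH⟩ : C (p : ℤ) ∣ G - C N * X ^ i := (C_dvd_iff_dvd_coeff _ _).2 fun j => by
    rw [coeff_sub, coeff_C_mul_X_pow]
    split_ifs with hj
    · rw [hj, hGi, sub_self]
      exact dvd_zero _
    · rw [sub_zero]
      exact hGj j hj
  refine ⟨N, H, N / c₀, (Nat.prime_iff_prime_int.mp Fact.out).coprime_iff_not_dvd.2 hN, ?_⟩
  rw [← hH, add_sub_cancel, hG, ← mul_assoc, ← Polynomial.C_mul, div_eq_mul_inv]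

theorem Matrix.exists_coprime_relation_of_eigenvalues {K : Type*} [Field K] [IsAlgClosed K]
    [Algebra ℚ K] {n : Type*} [Fintype n] [DecidableEq n] (B : Matrix n n ℚ) {p : ℕ}
    [Fact p.Prime] {v : AbsoluteValue K ℝ} (hv : IsNonarchimedean v)
    (hvp : ∀ q : ℚ, v (algebraMap ℚ K q) = padicNorm p q)
    (heig : ∀ x, (B.charpoly.map (algebraMap ℚ K)).IsRoot x → v x ≠ 1) :
    ∃ (N : ℤ) (i : ℕ) (H : ℤ[X]), IsCoprime (p : ℤ) N ∧
      aeval B (C N * X ^ i + C (p : ℤ) * H) = 0 := by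
  obtain ⟨i, hi⟩ := (B.charpoly_monic.map (algebraMap ℚ K)).exists_isDominantCoeff hv
    (IsAlgClosed.splits _) heig
  have hdom : IsDominantCoeff (padicNorm p) B.charpoly i := fun j hj => by
    have := hi j hj
    simp only [coeff_map, hvp] at this
    exact_mod_cast this
  obtain ⟨N, H, c, hpN, hmap⟩ := hdom.exists_coprime_relation
  refine ⟨N, i, H, hpN, ?_⟩
  rw [← aeval_map_algebraMap ℚ, algebraMap_int_eq, hmap, aeval_mul, Matrix.aeval_self_charpoly,
    mul_zero]

section Laurent

open LaurentPolynomial (T T_add T_zero)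

variable {R : Type*} [CommRing R] {m : ℕ} (A : (Matrix (Fin m) (Fin m) R)ˣ)

/-- `laurentModule A` is `Module.compHom` along this ring hom, so `r • x = laurentHom A r x`
holds by `rfl`. -/
noncomputable def laurentHom : ℤ[T;T⁻¹] →+* Module.End ℤ (Fin m → R) :=
  (AddMonoidAlgebra.lift ℤ (Module.End ℤ (Fin m → R)) ℤ
    ((Units.coeHom _).comp ((zpowersHom _) (matUnitEnd A)))).toRingHom

theorem laurentHom_toLaurent_apply (G : ℤ[X]) (x : Fin m → R) :
    laurentHom A (toLaurent G) x = (aeval A.val G).mulVec x := by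
  let ψ : Matrix (Fin m) (Fin m) R →+* Module.End ℤ (Fin m → R) :=
    { toFun := fun B => (Matrix.mulVecLin B).restrictScalars ℤ
      map_one' := by ext; simp
      map_mul' := fun B C => by ext; simp [Matrix.mulVecLin_mul]
      map_zero' := by ext; simp
      map_add' := fun B C => by ext; simp }
  suffices (laurentHom A).comp toLaurent = ψ.comp (aeval A.val).toRingHom from
    congr($this G x)
  refine ringHom_ext' (RingHom.ext_int _ _) ?_
  simp only [RingHom.coe_comp, Function.comp_apply, toLaurent_X, laurentHom, T,
    AlgHom.toRingHom_eq_coe, RingHom.coe_coe, AddMonoidAlgebra.lift_single]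
  rw [one_smul, aeval_X]
  rfl

theorem exists_laurentHom_mul_eq_one {p N : ℤ} (hpN : IsCoprime p N) {i : ℕ} {H : ℤ[X]}
    (hA : aeval A.val (C N * X ^ i + C p * H) = 0) : ∃ r : ℤ[T;T⁻¹], laurentHom A (r * p) = 1 := by
  obtain ⟨a, b, hab⟩ := hpN
  have hG : laurentHom A (toLaurent (C N * X ^ i + C p * H)) = 0 :=
    LinearMap.ext fun x => by rw [laurentHom_toLaurent_apply, hA, Matrix.zero_mulVec]; rfl
  have hT : (T i * T (-i) : ℤ[T;T⁻¹]) = 1 := by rw [← T_add, add_neg_cancel, T_zero]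
  refine ⟨(a : ℤ[T;T⁻¹]) - (b : ℤ[T;T⁻¹]) * toLaurent H * T (-i), ?_⟩
  have key : ((a : ℤ[T;T⁻¹]) - (b : ℤ[T;T⁻¹]) * toLaurent H * T (-i)) * (p : ℤ[T;T⁻¹]) =
      1 - (b : ℤ[T;T⁻¹]) * T (-i) * toLaurent (C N * X ^ i + C p * H) := by
    simp only [map_add, map_mul, eq_intCast C, map_intCast, toLaurent_X_pow]
    have hab' := congr_arg (Int.cast : ℤ → ℤ[T;T⁻¹]) hab
    push_cast at hab'
    linear_combination hab' + (b * N : ℤ[T;T⁻¹]) * hT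
  rw [key, map_sub, map_one, map_mul, hG, mul_zero, sub_zero]

end Laurent

theorem exists_laurentHom_mul_natCast_eq_one_of_eigenvalues {R : Subring ℚ} {m : ℕ}
    (A : (Matrix (Fin m) (Fin m) R)ˣ) {K : Type*} [Field K] [IsAlgClosed K] [Algebra ℚ K]
    {p : ℕ} [Fact p.Prime] {v : AbsoluteValue K ℝ} (hv : IsNonarchimedean v)
    (hvp : ∀ q : ℚ, v (algebraMap ℚ K q) = padicNorm p q)
    (heig : ∀ x, (A.val.map fun a => algebraMap ℚ K (a : ℚ)).charpoly.IsRoot x → v x ≠ 1) :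
    ∃ r : ℤ[T;T⁻¹], laurentHom A (r * p) = 1 := by
  have hchar : (A.val.map fun a => algebraMap ℚ K (a : ℚ)).charpoly =
      (A.val.map (↑)).charpoly.map (algebraMap ℚ K) := by
    rw [← Matrix.charpoly_map, Matrix.map_map]
    rfl
  obtain ⟨N, i, H, hpN, hrel⟩ :=
    (A.val.map (↑)).exists_coprime_relation_of_eigenvalues hv hvp (hchar ▸ heig)
  have hA : aeval A.val (C N * X ^ i + C (p : ℤ) * H) = 0 := by
    refine Matrix.map_injective Subtype.val_injective ?_
    dsimp only
    rw [Matrix.map_zero _ rfl, ← hrel]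
    exact (aeval_algHom_apply R.subtype.toIntAlgHom.mapMatrix _ _).symm
  rw [← Int.cast_natCast]
  exact exists_laurentHom_mul_eq_one A hpN hA

theorem Submodule.mem_of_nsmul_mem_of_mem_closure {Λ M : Type*} [Semiring Λ] [AddCommMonoid M]
    [Module Λ M] (P : Submodule Λ M) {s : Set ℕ}
    (hs : ∀ p ∈ s, ∃ r : Λ, ∀ y : M, r • p • y = y) {n : ℕ} (hn : n ∈ Submonoid.closure s)
    {y : M} (hy : n • y ∈ P) : y ∈ P := by
  induction hn using Submonoid.closure_induction generalizing y with
  | mem p hp =>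
    obtain ⟨r, hr⟩ := hs p hp
    exact hr y ▸ P.smul_mem r hy
  | one => simpa using hy
  | mul a b _ _ ha hb => exact hb (ha (by rwa [← mul_smul]))

theorem AddMonoidHom.eq_zero_of_nsmul_eq_zero {M G : Type*} [AddMonoid M] [AddCommMonoid G]
    {n : ℕ} (hM : ∀ x : M, ∃ y, n • y = x) {χ : M →+ G} (hχ : n • χ = 0) : χ = 0 := by
  ext x
  obtain ⟨y, rfl⟩ := hM x
  simpa using DFunLike.congr_fun hχ y

def AbsoluteValue.ofNonarchimedean {F : Type*} [Field F] (w : F → ℝ) (h0 : ∀ x, 0 ≤ w x)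
    (hmul : ∀ x y, w (x * y) = w x * w y) (hadd : ∀ x y, w (x + y) ≤ max (w x) (w y))
    (hw0 : w 0 = 0) (hw1 : w 1 = 1) : AbsoluteValue F ℝ where
  toFun := w
  map_mul' := hmul
  nonneg' := h0
  eq_zero' x := by
    refine ⟨fun hx => by_contra fun hx0 => ?_, fun hx => hx ▸ hw0⟩
    have := hmul x x⁻¹
    rw [mul_inv_cancel₀ hx0, hw1, hx, zero_mul] at this
    exact one_ne_zero this
  add_le' x y := (hadd x y).trans (max_le_add_of_nonneg (h0 x) (h0 y))

namespace ZinvS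

variable {S : Finset ℕ}

theorem exists_natCast_mul_eq_intCast {x : ℚ} (hx : x ∈ ZinvS S) :
    ∃ n ∈ Submonoid.closure (S : Set ℕ), ∃ z : ℤ, (n : ℚ) * x = z := by
  induction hx using Subring.closure_induction with
  | mem x hx =>
    obtain ⟨l, hl, rfl⟩ := hx
    rcases eq_or_ne l 0 with rfl | hl0
    · exact ⟨0, Submonoid.subset_closure hl, 0, by simp⟩
    · exact ⟨l, Submonoid.subset_closure hl, 1, by simp [hl0]⟩
  | zero => exact ⟨1, one_mem _, 0, by simp⟩
  | one => exact ⟨1, one_mem _, 1, by simp⟩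
  | add x y _ _ hx hy =>
    obtain ⟨n₁, hn₁, z₁, h₁⟩ := hx
    obtain ⟨n₂, hn₂, z₂, h₂⟩ := hy
    refine ⟨n₁ * n₂, mul_mem hn₁ hn₂, n₂ * z₁ + n₁ * z₂, ?_⟩
    push_cast
    linear_combination (n₂ : ℚ) * h₁ + (n₁ : ℚ) * h₂
  | neg x _ hx =>
    obtain ⟨n, hn, z, h⟩ := hx
    exact ⟨n, hn, -z, by push_cast; linear_combination -h⟩
  | mul x y _ _ hx hy =>
    obtain ⟨n₁, hn₁, z₁, h₁⟩ := hx
    obtain ⟨n₂, hn₂, z₂, h₂⟩ := hy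
    refine ⟨n₁ * n₂, mul_mem hn₁ hn₂, z₁ * z₂, ?_⟩
    push_cast
    linear_combination (n₂ * y) * h₁ + (z₁ : ℚ) * h₂

theorem isUnit_natCast {p : ℕ} (hp : p ∈ S) (hp0 : p ≠ 0) : IsUnit (p : ZinvS S) :=
  .of_mul_eq_one ⟨(p : ℚ)⁻¹, Subring.subset_closure ⟨p, hp, rfl⟩⟩
    (Subtype.ext (by simp [hp0]))

theorem exists_pow_nsmul_eq {M : Type*} [AddCommMonoid M] [Module (ZinvS S) M] {p : ℕ}
    (hp : p ∈ S) (hp0 : p ≠ 0) (k : ℕ) (x : M) : ∃ y : M, p ^ k • y = x := by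
  obtain ⟨u, hu⟩ := (isUnit_natCast hp hp0).pow k
  refine ⟨(↑u⁻¹ : ZinvS S) • x, ?_⟩
  rw [← Nat.cast_smul_eq_nsmul (ZinvS S), Nat.cast_pow, ← hu, smul_smul, Units.mul_inv, one_smul]

theorem span_range_single_one_eq_top {m : ℕ} {Λ : Type*} [Ring Λ]
    [Module Λ (Fin m → ZinvS S)]
    (hS : ∀ p ∈ S, ∃ r : Λ, ∀ y : Fin m → ZinvS S, r • p • y = y) :
    Submodule.span Λ (Set.range fun j : Fin m => Pi.single j (1 : ZinvS S)) = ⊤ := by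
  refine eq_top_iff.2 fun v _ => ?_
  rw [← Finset.univ_sum_single v]
  refine Submodule.sum_mem _ fun j _ => ?_
  obtain ⟨n, hn, z, hz⟩ := exists_natCast_mul_eq_intCast (v j).2
  refine Submodule.mem_of_nsmul_mem_of_mem_closure _ hS hn ?_
  have : n • Pi.single j (v j) = z • (Pi.single j 1 : Fin m → ZinvS S) := by
    ext k
    rcases eq_or_ne k j with rfl | hk
    · simpa using hz
    · simp [hk]
  rw [this]
  exact zsmul_mem (Submodule.subset_span (Set.mem_range_self j)) z

end ZinvS

/- The embedding `ℚ̄ ↪ ℂ_p` enters only through the absolute value `w p` it induces, and the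
Pontryagin dual of the discrete group `ℤ[1/S]^m` is modelled as `ℤ[1/S]^m →+ ℝ/ℤ`. -/
theorem laurent_finite_and_bounded_p_torsion
    (S : Finset ℕ) (hS : ∀ l ∈ S, l.Prime) (m : ℕ)
    (A : (Matrix (Fin m) (Fin m) (ZinvS S))ˣ)
    (w : ℕ → AlgebraicClosure ℚ → ℝ)
    (hw_nonneg : ∀ l ∈ S, ∀ x, 0 ≤ w l x)
    (hw_mul : ∀ l ∈ S, ∀ x y, w l (x * y) = w l x * w l y)
    (hw_add : ∀ l ∈ S, ∀ x y, w l (x + y) ≤ max (w l x) (w l y))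
    (hw_rat : ∀ l ∈ S, ∀ q : ℚ, w l (algebraMap ℚ (AlgebraicClosure ℚ) q) = (padicNorm l q : ℝ))
    (heig : ∀ l ∈ S, ∀ x : AlgebraicClosure ℚ,
      ((A.val.map fun a => algebraMap ℚ (AlgebraicClosure ℚ) (a : ℚ)).charpoly).IsRoot x →
      w l x ≠ 1) :
    (@Module.Finite (AddMonoidAlgebra ℤ ℤ) (Fin m → ZinvS S) _ _ (laurentModule A)) ∧
    (∀ p ∈ S, ∃ i₀ : ℕ, ∀ i : ℕ, i₀ ≤ i →
      {χ : (Fin m → ZinvS S) →+ AddCircle (1 : ℝ) | p ^ i • χ = 0} =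
      {χ : (Fin m → ZinvS S) →+ AddCircle (1 : ℝ) | p ^ i₀ • χ = 0}) := by
  let := laurentModule A
  refine ⟨⟨⟨Finset.univ.image fun j => Pi.single j 1, ?_⟩⟩, fun p hp => ⟨0, fun k _ => ?_⟩⟩
  · rw [Finset.coe_image, Finset.coe_univ, Set.image_univ]
    refine ZinvS.span_range_single_one_eq_top fun p hp => ?_
    have : Fact p.Prime := ⟨hS p hp⟩
    have hw0 : w p 0 = 0 := by simpa using hw_rat p hp 0
    have hw1 : w p 1 = 1 := by simpa using hw_rat p hp 1
    obtain ⟨r, hr⟩ := exists_laurentHom_mul_natCast_eq_one_of_eigenvalues A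
      (v := .ofNonarchimedean (w p) (hw_nonneg p hp) (hw_mul p hp) (hw_add p hp) hw0 hw1)
      (hw_add p hp) (hw_rat p hp) (heig p hp)
    refine ⟨r, fun y => ?_⟩
    rw [← Nat.cast_smul_eq_nsmul ℤ[T;T⁻¹], smul_smul]
    exact LinearMap.congr_fun hr y
  · ext χ
    simp only [Set.mem_ofPred_eq, pow_zero, one_smul]
    exact ⟨AddMonoidHom.eq_zero_of_nsmul_eq_zero
      (ZinvS.exists_pow_nsmul_eq hp (hS p hp).ne_zero k), fun h => by rw [h, smul_zero]⟩
end

section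
/- Let S be a finite set of primes and A ∈ M_m(ℤ[1/S]) with det A ≠ 0. Then the quotient group ℤ[1/S]^m / A·ℤ[1/S]^m is finite of cardinality (∏_{l ∈ S} |det A|_l) · |det A|, where |·|_l is the l-adic absolute value with |l|_l = l^{-1} and |·| is the ordinary (archimedean) absolute value. -/
namespace Ideal

variable {R : Type*} [CommRing R]

theorem card_quotient_span_singleton_of_isUnit {u : R} (hu : IsUnit u) :
    Nat.card (R ⧸ span {u}) = 1 := by
  rw [span_singleton_eq_top.mpr hu]
  exact Nat.card_unique

variable [IsDomain R]

theorem card_quotient_span_singleton_mul {a : R} (ha : a ≠ 0) (b : R) :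
    Nat.card (R ⧸ span {a * b}) = Nat.card (R ⧸ span {a}) * Nat.card (R ⧸ span {b}) := by
  let f : R →+ R := AddMonoidHom.mulLeft a
  have hf : Function.Injective f := mul_right_injective₀ ha
  have hmap : ∀ c : R, (span {c}).toAddSubgroup.map f = (span {a * c}).toAddSubgroup := by
    intro c
    ext x
    simp [f, mem_span_singleton', mul_left_comm, eq_comm]
  have hle : (span {a * b}).toAddSubgroup ≤ (span {a}).toAddSubgroup :=
    Submodule.toAddSubgroup_mono (span_singleton_le_span_singleton.mpr (dvd_mul_right a b))
  have hrel : (span {a * b}).toAddSubgroup.relIndex (span {a}).toAddSubgroup =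
      (span {b}).toAddSubgroup.index := by
    rw [← hmap, ← mul_one a, ← hmap, span_singleton_one, Submodule.top_toAddSubgroup,
      AddSubgroup.relIndex_map_map_of_injective _ _ hf, AddSubgroup.relIndex_top_right]
  rw [mul_comm (Nat.card _)]
  exact (hrel ▸ AddSubgroup.relIndex_mul_index hle).symm

theorem card_quotient_span_singleton_prod {ι : Type*} (s : Finset ι) {a : ι → R}
    (ha : ∀ i ∈ s, a i ≠ 0) :
    Nat.card (R ⧸ span {∏ i ∈ s, a i}) = ∏ i ∈ s, Nat.card (R ⧸ span {a i}) := by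
  induction s using Finset.cons_induction with
  | empty => exact card_quotient_span_singleton_of_isUnit isUnit_one
  | cons i s _ ih =>
    rw [Finset.forall_mem_cons] at ha
    rw [Finset.prod_cons, Finset.prod_cons, card_quotient_span_singleton_mul ha.1, ih ha.2]

end Ideal

open Module in
theorem Submodule.card_quotient_eq_card_quotient_span_det {R M : Type*} [CommRing R] [IsDomain R]
    [IsPrincipalIdealRing R] [AddCommGroup M] [Module R M] [Module.Free R M] [Module.Finite R M]
    (N : Submodule R M) (e : M ≃ₗ[R] N) :
    Nat.card (M ⧸ N) =
      Nat.card (R ⧸ Ideal.span {LinearMap.det (N.subtype ∘ₗ e.toLinearMap)}) := by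
  classical
  let b := Free.chooseBasis R M
  have h : finrank R N = finrank R M := e.finrank_eq.symm
  let a := smithNormalFormCoeffs b h
  let b' := smithNormalFormTopBasis b h
  let f : M →ₗ[R] M :=
    N.subtype ∘ₗ (b'.equiv (smithNormalFormBotBasis b h) (Equiv.refl _)).toLinearMap
  have hdiag : LinearMap.toMatrix b' b' f = Matrix.diagonal a := by
    ext i j
    rw [LinearMap.toMatrix_apply]
    rcases eq_or_ne i j with rfl | hij
    · simp [f, b', a]
    · simp [f, b', Matrix.diagonal_apply_ne _ hij, Finsupp.single_eq_of_ne hij]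
  have hdet : Associated (LinearMap.det (N.subtype ∘ₗ e.toLinearMap)) (∏ i, a i) := by
    rw [← Matrix.det_diagonal, ← hdiag, LinearMap.det_toMatrix]
    exact LinearMap.associated_det_comp_equiv _ _ _
  rw [Ideal.span_singleton_eq_span_singleton.mpr hdet,
    Ideal.card_quotient_span_singleton_prod _ fun i _ => smithNormalFormCoeffs_ne_zero b h i,
    Nat.card_congr (quotientEquivPiSpan N b h).toEquiv, Nat.card_pi]

theorem Matrix.card_quotient_range_mulVecLin {R ι : Type*} [CommRing R] [IsDomain R]
    [IsPrincipalIdealRing R] [Fintype ι] [DecidableEq ι] (A : Matrix ι ι R) (hA : A.det ≠ 0) :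
    Nat.card ((ι → R) ⧸ LinearMap.range A.mulVecLin) =
      Nat.card (R ⧸ Ideal.span {A.det}) := by
  have hinj : Function.Injective A.mulVecLin := by
    rw [← LinearMap.ker_eq_bot, Matrix.ker_mulVecLin_eq_bot_iff]
    intro v hv
    by_contra hne
    exact hA (Matrix.exists_mulVec_eq_zero_iff.mp ⟨v, hne, hv⟩)
  have hcomp : (LinearMap.range A.mulVecLin).subtype ∘ₗ
      (LinearEquiv.ofInjective _ hinj).toLinearMap = A.mulVecLin := by
    ext
    simp
  rw [Submodule.card_quotient_eq_card_quotient_span_det _ (LinearEquiv.ofInjective _ hinj), hcomp,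
    ← Matrix.toLin'_apply', LinearMap.det_toLin']

namespace IsLocalization

variable {R S : Type*} [CommRing R] [CommRing S] [Algebra R S]

theorem isPrincipalIdealRing (M : Submonoid R) [IsLocalization M S] [IsPrincipalIdealRing R] :
    IsPrincipalIdealRing S where
  principal J := by
    obtain ⟨g, hg⟩ := (IsPrincipalIdealRing.principal (J.under R)).principal
    refine ⟨⟨algebraMap R S g, ?_⟩⟩
    rw [← map_under M S J, hg, Ideal.submodule_span_eq, Ideal.map_span, Set.image_singleton]

theorem card_quotient_map (M : Submonoid R) [IsLocalization M S] (I : Ideal R)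
    (hM : ∀ m ∈ M, IsUnit (Ideal.Quotient.mk I m)) :
    Nat.card (S ⧸ I.map (algebraMap R S)) = Nat.card (R ⧸ I) := by
  refine (Nat.card_congr
    (atUnits (R ⧸ I) (Algebra.algebraMapSubmonoid (R ⧸ I) M) ?_).toEquiv).symm
  rintro _ ⟨m, hm, rfl⟩
  exact hM m hm

end IsLocalization

/-- By the product formula, the prime-to-`S` part of `|q|` when `q ≠ 0`. -/
noncomputable def sNorm (S : Finset ℕ) (q : ℚ) : ℝ :=
  (∏ l ∈ S, (l : ℝ) ^ (-(padicValRat l q))) * |(q : ℝ)|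

section sNorm

variable {S : Finset ℕ}

theorem sNorm_mul (hS : ∀ l ∈ S, l.Prime) {q r : ℚ} (hq : q ≠ 0) (hr : r ≠ 0) :
    sNorm S (q * r) = sNorm S q * sNorm S r := by
  have hval : ∀ l ∈ S, (l : ℝ) ^ (-(padicValRat l (q * r))) =
      (l : ℝ) ^ (-(padicValRat l q)) * (l : ℝ) ^ (-(padicValRat l r)) := fun l hl => by
    have := Fact.mk (hS l hl)
    rw [padicValRat.mul hq hr, neg_add, zpow_add₀ (Nat.cast_ne_zero.mpr (hS l hl).ne_zero)]
  rw [sNorm, sNorm, sNorm, Finset.prod_congr rfl hval, Finset.prod_mul_distrib, Rat.cast_mul,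
    abs_mul]
  ring

theorem sNorm_neg (q : ℚ) : sNorm S (-q) = sNorm S q := by
  simp [sNorm, padicValRat.neg]

theorem sNorm_pos (hS : ∀ l ∈ S, l.Prime) {q : ℚ} (hq : q ≠ 0) : 0 < sNorm S q :=
  mul_pos (Finset.prod_pos fun l hl => zpow_pos (Nat.cast_pos.mpr (hS l hl).pos) _)
    (abs_pos.mpr (Rat.cast_ne_zero.mpr hq))

theorem sNorm_natCast_prime (hS : ∀ l ∈ S, l.Prime) {p : ℕ} (hp : p.Prime) :
    sNorm S p = if p ∈ S then 1 else (p : ℝ) := by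
  have := Fact.mk hp
  have hval : ∀ l ∈ S,
      (l : ℝ) ^ (-(padicValRat l p)) = if p = l then (p : ℝ)⁻¹ else 1 := by
    intro l hl
    have := Fact.mk (hS l hl)
    split_ifs with h
    · simp [← h, padicValNat_self]
    · simp [padicValNat_primes (Ne.symm h)]
  rw [sNorm, Finset.prod_congr rfl hval, Finset.prod_ite_eq]
  split_ifs
  · simp [hp.ne_zero]
  · simp

end sNorm

namespace ZinvS

variable {S : Finset ℕ}

theorem inv_natCast_mem {l : ℕ} (hl : l ∈ S) : (l : ℚ)⁻¹ ∈ ZinvS S :=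
  Subring.subset_closure ⟨l, hl, rfl⟩

theorem isUnit_natCast_s8 {l : ℕ} (hl : l ∈ S) (h0 : l ≠ 0) : IsUnit (l : ZinvS S) := by
  refine isUnit_iff_exists_inv.mpr ⟨⟨(l : ℚ)⁻¹, inv_natCast_mem hl⟩, Subtype.ext ?_⟩
  push_cast
  exact mul_inv_cancel₀ (Nat.cast_ne_zero.mpr h0)

theorem exists_mul_prod_pow_eq_intCast {x : ℚ} (hx : x ∈ ZinvS S) :
    ∃ (c : ℤ) (k : ℕ), x * (∏ l ∈ S, (l : ℚ)) ^ k = c := by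
  induction hx using Subring.closure_induction with
  | mem y hy =>
    obtain ⟨l, hl, rfl⟩ := hy
    rcases eq_or_ne l 0 with rfl | h0
    · exact ⟨0, 0, by simp⟩
    · refine ⟨∏ l' ∈ S.erase l, (l' : ℤ), 1, ?_⟩
      rw [pow_one, ← Finset.mul_prod_erase S _ hl, inv_mul_cancel_left₀ (by exact_mod_cast h0)]
      push_cast
      rfl
  | zero => exact ⟨0, 0, by simp⟩
  | one => exact ⟨1, 0, by simp⟩
  | add x y _ _ ihx ihy =>
    obtain ⟨c₁, k₁, h₁⟩ := ihx
    obtain ⟨c₂, k₂, h₂⟩ := ihy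
    refine ⟨c₁ * (∏ l ∈ S, (l : ℤ)) ^ k₂ + c₂ * (∏ l ∈ S, (l : ℤ)) ^ k₁, k₁ + k₂, ?_⟩
    push_cast
    linear_combination
      (∏ l ∈ S, (l : ℚ)) ^ k₂ * h₁ + (∏ l ∈ S, (l : ℚ)) ^ k₁ * h₂
  | neg x _ ih =>
    obtain ⟨c, k, h⟩ := ih
    exact ⟨-c, k, by push_cast; linear_combination -h⟩
  | mul x y _ _ ihx ihy =>
    obtain ⟨c₁, k₁, h₁⟩ := ihx
    obtain ⟨c₂, k₂, h₂⟩ := ihy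
    refine ⟨c₁ * c₂, k₁ + k₂, ?_⟩
    push_cast
    linear_combination y * (∏ l ∈ S, (l : ℚ)) ^ k₂ * h₁ + (c₁ : ℚ) * h₂

theorem isLocalization_away (hS : 0 ∉ S) :
    IsLocalization.Away (∏ l ∈ S, (l : ℤ)) (ZinvS S) := by
  refine (isLocalization_iff _ _).mpr ⟨?_, fun z => ?_, fun {x y} h => ⟨1, ?_⟩⟩
  · rintro ⟨_, k, rfl⟩
    rw [map_pow, map_prod]
    refine IsUnit.pow k (IsUnit.prod_iff.mpr fun l hl => ?_)
    simpa using isUnit_natCast_s8 (S := S) hl (ne_of_mem_of_not_mem hl hS)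
  · obtain ⟨c, k, h⟩ := exists_mul_prod_pow_eq_intCast z.2
    exact ⟨(c, ⟨_, k, rfl⟩), Subtype.ext (by simpa using h)⟩
  · have : (x : ℚ) = y := by simpa using congrArg (fun z : ZinvS S => (z : ℚ)) h
    simp [Int.cast_injective this]

theorem isPrincipalIdealRing (hS : 0 ∉ S) : IsPrincipalIdealRing (ZinvS S) :=
  have := isLocalization_away hS
  IsLocalization.isPrincipalIdealRing (Submonoid.powers (∏ l ∈ S, (l : ℤ)))

theorem card_quotient_span_natCast_of_coprime (hS : 0 ∉ S) {d : ℕ}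
    (hd : ∀ l ∈ S, Nat.Coprime l d) :
    Nat.card (ZinvS S ⧸ Ideal.span {(d : ZinvS S)}) = d := by
  have := isLocalization_away hS
  have hspan : Ideal.span {(d : ZinvS S)} =
      (Ideal.span {(d : ℤ)}).map (algebraMap ℤ (ZinvS S)) := by
    rw [Ideal.map_span, Set.image_singleton, map_natCast]
  rw [hspan, IsLocalization.card_quotient_map (Submonoid.powers (∏ l ∈ S, (l : ℤ))),
    Nat.card_congr (Int.quotientSpanNatEquivZMod d).toEquiv, Nat.card_zmod]
  rintro _ ⟨k, rfl⟩
  obtain ⟨u, v, huv⟩ : IsCoprime (((∏ l ∈ S, l) ^ k : ℕ) : ℤ) d :=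
    Nat.isCoprime_iff_coprime.mpr ((Nat.Coprime.prod_left hd).pow_left k)
  refine isUnit_iff_exists_inv'.mpr ⟨Ideal.Quotient.mk _ u, ?_⟩
  rw [← map_mul, ← map_one (Ideal.Quotient.mk _), Ideal.Quotient.eq, Ideal.mem_span_singleton]
  exact ⟨-v, by push_cast at huv; linear_combination huv⟩

theorem card_quotient_span_natCast_prime (hS : ∀ l ∈ S, l.Prime) {p : ℕ} (hp : p.Prime) :
    (Nat.card (ZinvS S ⧸ Ideal.span {(p : ZinvS S)}) : ℝ) = sNorm S p := by
  rw [sNorm_natCast_prime hS hp]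
  split_ifs with hpS
  · rw [Ideal.card_quotient_span_singleton_of_isUnit (isUnit_natCast_s8 hpS hp.ne_zero),
      Nat.cast_one]
  · rw [card_quotient_span_natCast_of_coprime (fun h0 => Nat.not_prime_zero (hS 0 h0))
      fun l hl => (Nat.coprime_primes (hS l hl) hp).mpr (ne_of_mem_of_not_mem hl hpS)]

theorem card_quotient_span_natCast (hS : ∀ l ∈ S, l.Prime) {n : ℕ} (hn : n ≠ 0) :
    (Nat.card (ZinvS S ⧸ Ideal.span {(n : ZinvS S)}) : ℝ) = sNorm S n := by
  induction n using induction_on_primes with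
  | zero => exact absurd rfl hn
  | one => simp [sNorm]
  | prime_mul p a hp ih =>
    have ha : a ≠ 0 := right_ne_zero_of_mul hn
    rw [Nat.cast_mul, Ideal.card_quotient_span_singleton_mul (Nat.cast_ne_zero.mpr hp.ne_zero),
      Nat.cast_mul, card_quotient_span_natCast_prime hS hp, ih ha, Nat.cast_mul,
      sNorm_mul hS (Nat.cast_ne_zero.mpr hp.ne_zero) (Nat.cast_ne_zero.mpr ha)]

theorem card_quotient_span_intCast (hS : ∀ l ∈ S, l.Prime) {c : ℤ} (hc : c ≠ 0) :
    (Nat.card (ZinvS S ⧸ Ideal.span {(c : ZinvS S)}) : ℝ) = sNorm S c := by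
  obtain ⟨n, rfl | rfl⟩ := Int.eq_nat_or_neg c
  · exact_mod_cast card_quotient_span_natCast hS (by simpa using hc)
  · rw [Int.cast_neg, Int.cast_neg, Ideal.span_singleton_neg, sNorm_neg]
    exact_mod_cast card_quotient_span_natCast hS (by simpa using hc)

theorem card_quotient_span (hS : ∀ l ∈ S, l.Prime) {x : ZinvS S} (hx : x ≠ 0) :
    (Nat.card (ZinvS S ⧸ Ideal.span {x}) : ℝ) = sNorm S x := by
  have := isLocalization_away fun h0 => Nat.not_prime_zero (hS 0 h0)
  obtain ⟨k, c, hc⟩ := IsLocalization.Away.surj (∏ l ∈ S, (l : ℤ)) x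
  have hunit : IsUnit (((∏ l ∈ S, l) ^ k : ℕ) : ZinvS S) := by
    simpa using
      (IsLocalization.Away.algebraMap_isUnit (∏ l ∈ S, (l : ℤ)) (S := ZinvS S)).pow k
  replace hc : x * (((∏ l ∈ S, l) ^ k : ℕ) : ZinvS S) = c := by simpa using hc
  have hq : (x : ℚ) * (((∏ l ∈ S, l) ^ k : ℕ) : ℚ) = c := by
    simpa using congrArg (fun z : ZinvS S => (z : ℚ)) hc
  have hx' : (x : ℚ) ≠ 0 := by exact_mod_cast hx
  have hN : (((∏ l ∈ S, l) ^ k : ℕ) : ℚ) ≠ 0 := by exact_mod_cast hunit.ne_zero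
  have hc0 : c ≠ 0 := by exact_mod_cast hq ▸ mul_ne_zero hx' hN
  calc (Nat.card (ZinvS S ⧸ Ideal.span {x}) : ℝ)
      = Nat.card (ZinvS S ⧸ Ideal.span {(c : ZinvS S)}) := by
        rw [← hc, Ideal.span_singleton_mul_right_unit hunit]
    _ = sNorm S x * sNorm S (((∏ l ∈ S, l) ^ k : ℕ) : ℚ) := by
        rw [card_quotient_span_intCast hS hc0, ← hq, sNorm_mul hS hx' hN]
    -- `N ^ k` is a unit, so the natural-number case gives `sNorm S (N ^ k) = 1`.
    _ = sNorm S x := by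
        rw [← card_quotient_span_natCast hS (by exact_mod_cast hN),
          Ideal.card_quotient_span_singleton_of_isUnit hunit, Nat.cast_one, mul_one]

end ZinvS

theorem card_quotient_by_matrix_image
    (S : Finset ℕ) (hS : ∀ l ∈ S, l.Prime) (m : ℕ)
    (A : Matrix (Fin m) (Fin m) (ZinvS S)) (hA : A.det ≠ 0) :
    Finite ((Fin m → ZinvS S) ⧸ LinearMap.range A.mulVecLin) ∧
    (Nat.card ((Fin m → ZinvS S) ⧸ LinearMap.range A.mulVecLin) : ℝ) =
      (∏ l ∈ S, (l : ℝ) ^ (-(padicValRat l (A.det : ℚ)))) * |((A.det : ℚ) : ℝ)| := by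
  have := ZinvS.isPrincipalIdealRing fun h0 => Nat.not_prime_zero (hS 0 h0)
  have hcard :
      (Nat.card ((Fin m → ZinvS S) ⧸ LinearMap.range A.mulVecLin) : ℝ) = sNorm S A.det := by
    rw [Matrix.card_quotient_range_mulVecLin A hA, ZinvS.card_quotient_span hS hA]
  have hpos : 0 < sNorm S A.det := sNorm_pos hS (by exact_mod_cast hA)
  refine ⟨Nat.finite_of_card_ne_zero ?_, hcard⟩
  exact_mod_cast (hcard ▸ hpos).ne'
end

section
/- Let S be a finite set of primes, p ∈ S, and A ∈ GL_m(ℤ[1/S]). Fix an embedding ℚ̄ ↪ ℂ_p and assume every eigenvalue λ of A satisfies |λ|_p ≠ 1. Then there exists a Laurent polynomial g ∈ ℤ[t^{±1}] with integer coefficients such that g(A) = p^{-1}·I in M_m(ℤ[1/S]). -/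
/-!
Over `ℚ̄`, the characteristic polynomial `χ` of `A` splits into factors `X - λ` with `|λ|_p ≠ 1`.
Multiplying out, one coefficient of `χ` is strictly `p`-adically larger than all the others: its
index `a` is the number of roots with `|λ|_p < 1` (a degenerate Newton polygon). Normalising that
coefficient to a `p`-adic unit and clearing denominators prime to `p` gives an integer polynomial
`z` with `z(A) = 0`, `p ∤ z_a` and `p ∣ z_j` for `j ≠ a`. Hence `z_a A^a ∈ p ℤ[A]`, so
`z_a / p ∈ ℤ[A, A⁻¹]`, and a Bézout relation `u z_a + v p = 1` yields `1 / p ∈ ℤ[A, A⁻¹]`.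
-/

open Polynomial

def HasDominantCoeff {R S : Type*} [Semiring R] [LT S] (v : R → S) (f : R[X]) (a : ℕ) : Prop :=
  ∀ j ≠ a, v (f.coeff j) < v (f.coeff a)

theorem hasDominantCoeff_map_iff {R R' S : Type*} [Semiring R] [Semiring R'] [LT S]
    {φ : R →+* R'} {v : R' → S} {v' : R → S} (h : ∀ x, v (φ x) = v' x) {f : R[X]} {a : ℕ} :
    HasDominantCoeff v (f.map φ) a ↔ HasDominantCoeff v' f a := by
  simp only [HasDominantCoeff, coeff_map, h]

def AbsoluteValue.ofIsNonarchimedean {K S : Type*} [DivisionRing K] [Field S] [LinearOrder S]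
    [IsStrictOrderedRing S] {w : K → S} (hna : IsNonarchimedean w) (hnn : ∀ x, 0 ≤ w x)
    (hmul : ∀ x y, w (x * y) = w x * w y) (h0 : w 0 = 0) (h1 : w 1 = 1) : AbsoluteValue K S where
  toFun := w
  map_mul' := hmul
  nonneg' := hnn
  eq_zero' x := by
    refine ⟨fun hx => by_contra fun hx0 => one_ne_zero (α := S) ?_, fun hx => hx ▸ h0⟩
    rw [← h1, ← mul_inv_cancel₀ hx0, hmul, hx, zero_mul]
  add_le' _ _ := hna.add_le hnn

namespace HasDominantCoeff

variable {R S : Type*} [CommRing R] [Field S] [LinearOrder S] {v : AbsoluteValue R S} {f : R[X]}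
  {a : ℕ}

theorem pos (hf : HasDominantCoeff v f a) : 0 < v (f.coeff a) :=
  (v.nonneg _).trans_lt (hf (a + 1) (by omega))

theorem le (hf : HasDominantCoeff v f a) (j : ℕ) : v (f.coeff j) ≤ v (f.coeff a) := by
  rcases eq_or_ne j a with rfl | hj
  exacts [le_rfl, (hf j hj).le]

theorem X_mul (hf : HasDominantCoeff v f a) : HasDominantCoeff v (X * f) (a + 1)
  | 0, _ => by simpa using hf.pos
  | k + 1, hk => by simpa [coeff_X_mul] using hf k (by omega)

variable [IsStrictOrderedRing S]

theorem one [Nontrivial R] : HasDominantCoeff v (1 : R[X]) 0 := fun j hj => by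
  simp [coeff_one, hj]

theorem add (hv : IsNonarchimedean v) (hf : HasDominantCoeff v f a) {g : R[X]}
    (hg : ∀ j, v (g.coeff j) < v (f.coeff a)) : HasDominantCoeff v (f + g) a := by
  intro j hj
  rw [coeff_add, coeff_add, hv.add_eq_left_of_lt (hg a)]
  exact (hv _ _).trans_lt (max_lt (hf j hj) (hg j))

theorem C_mul (hf : HasDominantCoeff v f a) {x : R} (hx : x ≠ 0) :
    HasDominantCoeff v (C x * f) a := fun j hj => by
  simpa only [coeff_C_mul, map_mul] using mul_lt_mul_of_pos_left (hf j hj) (v.pos hx)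

theorem mul_X_sub_C_of_lt_one (hv : IsNonarchimedean v) (hf : HasDominantCoeff v f a) {x : R}
    (hx : v x < 1) : HasDominantCoeff v (f * (X - C x)) (a + 1) := by
  rw [show f * (X - C x) = X * f + C (-x) * f by rw [C_neg]; ring]
  refine hf.X_mul.add hv fun j => ?_
  rw [coeff_X_mul, coeff_C_mul, map_mul, v.map_neg]
  calc v x * v (f.coeff j) ≤ v x * v (f.coeff a) := by gcongr; exact hf.le j
    _ < v (f.coeff a) := mul_lt_of_lt_one_left hf.pos hx

theorem mul_X_sub_C_of_one_lt (hv : IsNonarchimedean v) (hf : HasDominantCoeff v f a) {x : R}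
    (hx : 1 < v x) : HasDominantCoeff v (f * (X - C x)) a := by
  rw [show f * (X - C x) = C (-x) * f + X * f by rw [C_neg]; ring]
  have hx0 : -x ≠ 0 := neg_ne_zero.2 (v.pos_iff.1 (zero_lt_one.trans hx))
  refine (hf.C_mul hx0).add hv fun j => ?_
  rw [coeff_C_mul, map_mul, v.map_neg]
  calc v ((X * f).coeff j) ≤ v (f.coeff a) := by
        cases j with
        | zero => simp [hf.pos.le]
        | succ k => simpa [coeff_X_mul] using hf.le k
    _ < v x * v (f.coeff a) := lt_mul_of_one_lt_left hf.pos hx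

end HasDominantCoeff

theorem exists_hasDominantCoeff_multiset_prod_X_sub_C {R S : Type*} [CommRing R] [Nontrivial R]
    [Field S] [LinearOrder S] [IsStrictOrderedRing S] {v : AbsoluteValue R S}
    (hv : IsNonarchimedean v) (s : Multiset R) (hs : ∀ x ∈ s, v x ≠ 1) :
    ∃ a, HasDominantCoeff v (s.map fun x => X - C x).prod a := by
  induction s using Multiset.induction_on with
  | empty => exact ⟨0, by simpa using HasDominantCoeff.one⟩
  | cons x s ih =>
    obtain ⟨a, ha⟩ := ih fun y hy => hs y (Multiset.mem_cons_of_mem hy)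
    rw [Multiset.map_cons, Multiset.prod_cons, mul_comm]
    rcases (hs x (Multiset.mem_cons_self x s)).lt_or_gt with hx | hx
    exacts [⟨a + 1, ha.mul_X_sub_C_of_lt_one hv hx⟩, ⟨a, ha.mul_X_sub_C_of_one_lt hv hx⟩]

theorem exists_hasDominantCoeff_charpoly {k K S n : Type*} [Field k] [Field K] [IsAlgClosed K]
    [Field S] [LinearOrder S] [IsStrictOrderedRing S] [Fintype n] [DecidableEq n] (ψ : k →+* K)
    {v : AbsoluteValue K S} (hv : IsNonarchimedean v) {v' : k → S} (hvv' : ∀ x, v (ψ x) = v' x)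
    (M : Matrix n n k) (hM : ∀ x, (M.map ψ).charpoly.IsRoot x → v x ≠ 1) :
    ∃ a, HasDominantCoeff v' M.charpoly a := by
  set F := M.charpoly.map ψ with hF
  have hsplit : F = (F.roots.map fun x => X - C x).prod :=
    (IsAlgClosed.splits F).eq_prod_roots_of_monic (M.charpoly_monic.map ψ)
  obtain ⟨a, ha⟩ := exists_hasDominantCoeff_multiset_prod_X_sub_C hv F.roots fun x hx =>
    hM x (by rw [Matrix.charpoly_map]; exact isRoot_of_mem_roots hx)
  rw [← hsplit, hF, hasDominantCoeff_map_iff hvv'] at ha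
  exact ⟨a, ha⟩

section Padic

open Rat.AbsoluteValue

variable {p : ℕ} [hp : Fact p.Prime]
include hp

theorem not_dvd_den_of_padicNorm_le_one {r : ℚ} (h : padicNorm p r ≤ 1) : ¬ p ∣ r.den := by
  intro hden
  have hnum : ¬ (p : ℤ) ∣ r.num := fun hnum =>
    hp.out.not_dvd_one (r.reduced.gcd_eq_one ▸ Nat.dvd_gcd (Int.natCast_dvd.1 hnum) hden)
  have hden_lt : padicNorm p r.den < 1 := (padicNorm.nat_lt_one_iff _).2 hden
  have hden_pos : 0 < padicNorm p r.den :=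
    (padicNorm.nonneg _).lt_of_ne' (padicNorm.nonzero (by exact_mod_cast r.den_ne_zero))
  rw [← r.num_div_den, padicNorm.div, (padicNorm.int_eq_one_iff _).2 hnum] at h
  exact h.not_gt (one_lt_one_div hden_pos hden_lt)

theorem exists_int_polynomial_of_hasDominantCoeff {q : ℚ[X]} {a : ℕ}
    (hq : HasDominantCoeff (padic p) q a) :
    ∃ (z : ℤ[X]) (c : ℚ), z.map (Int.castRingHom ℚ) = C c * q ∧ IsCoprime (z.coeff a) p ∧
      ∀ j ≠ a, (p : ℤ) ∣ z.coeff j := by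
  have hqa : q.coeff a ≠ 0 := (padic p).pos_iff.1 hq.pos
  set r := C (q.coeff a)⁻¹ * q with hr_def
  have hr : HasDominantCoeff (padic p) r a := hq.C_mul (inv_ne_zero hqa)
  have hra : r.coeff a = 1 := by simp [r, inv_mul_cancel₀ hqa]
  have hr_lt : ∀ j ≠ a, padicNorm p (r.coeff j) < 1 := fun j hj => by
    have h := hr j hj
    rw [hra, map_one, padic_eq_padicNorm] at h
    exact_mod_cast h
  have hr_le : ∀ j, padicNorm p (r.coeff j) ≤ 1 := fun j => by
    rcases eq_or_ne j a with rfl | hj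
    exacts [by simp [hra], (hr_lt j hj).le]
  clear_value r
  set D : ℕ := ∏ j ∈ r.support, (r.coeff j).den
  have hD : ¬ p ∣ D := by
    simp only [D, (Nat.prime_iff.1 hp.out).dvd_finsetProd_iff, not_exists, not_and]
    exact fun j _ => not_dvd_den_of_padicNorm_le_one (hr_le j)
  obtain ⟨z, hz⟩ : C (D : ℚ) * r ∈ lifts (Int.castRingHom ℚ) := by
    refine (lifts_iff_coeff_lifts _).2 fun j => ?_
    by_cases hj : j ∈ r.support
    · obtain ⟨k, hk⟩ : (r.coeff j).den ∣ D := Finset.dvd_prod_of_mem _ hj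
      refine ⟨k * (r.coeff j).num, ?_⟩
      rw [coeff_C_mul, eq_intCast, Int.cast_mul, ← Rat.mul_den_eq_num, hk]
      push_cast
      ring
    · exact ⟨0, by simp [notMem_support_iff.1 hj]⟩
  have hzr : ∀ j, (z.coeff j : ℚ) = D * r.coeff j := fun j => by
    simpa using congrArg (coeff · j) hz
  rw [coe_mapRingHom] at hz
  have hza : z.coeff a = D := by
    have h := hzr a
    rw [hra, mul_one] at h
    exact_mod_cast h
  refine ⟨z, D * (q.coeff a)⁻¹, by rw [hz, hr_def, C_mul, mul_assoc], ?_, fun j hj => ?_⟩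
  · rw [hza, Nat.isCoprime_iff_coprime]
    exact ((Nat.Prime.coprime_iff_not_dvd hp.out).2 hD).symm
  · rw [← padicNorm.int_lt_one_iff, hzr, padicNorm.mul]
    exact mul_lt_one_of_nonneg_of_lt_one_right (padicNorm.of_nat _) (padicNorm.nonneg _)
      (hr_lt j hj)

end Padic

theorem Polynomial.exists_eq_C_mul_X_pow_add_C_mul {R : Type*} [Ring R] {z : R[X]} {a : ℕ} {p : R}
    (hdvd : ∀ j ≠ a, p ∣ z.coeff j) : ∃ y : R[X], z = C (z.coeff a) * X ^ a + C p * y := by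
  obtain ⟨y, hy⟩ : C p ∣ z - C (z.coeff a) * X ^ a := by
    refine (C_dvd_iff_dvd_coeff _ _).2 fun j => ?_
    rw [coeff_sub, coeff_C_mul_X_pow]
    split_ifs with hj
    · rw [hj, sub_self]; exact dvd_zero p
    · rw [sub_zero]; exact hdvd j hj
  exact ⟨y, by rw [← hy, add_sub_cancel]⟩

section Laurent

open scoped LaurentPolynomial

variable {R : Type*} [Ring R]

theorem LaurentPolynomial.smeval_toLaurent_mul_T {k : Type*} [CommRing k] [Algebra k R]
    (y : k[X]) (A : Rˣ) (n : ℤ) :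
    (toLaurent y * LaurentPolynomial.T n).smeval A = aeval (A : R) y * ↑(A ^ n) := by
  induction y using Polynomial.induction_on' with
  | add f g hf hg => rw [map_add, add_mul, smeval_add, hf, hg, map_add, add_mul]
  | monomial i c =>
    rw [toLaurent_C_mul_T, mul_T_assoc, smeval_C_mul_T_n, aeval_monomial, zpow_add,
      Units.val_mul, zpow_natCast, Units.val_pow_eq_pow_val, Algebra.smul_def, mul_assoc]

theorem exists_smeval_eq_inv_of_aeval_eq_zero (A : Rˣ) {z : ℤ[X]} (hz : aeval (A : R) z = 0)
    {a : ℕ} {p : ℤ} (hcop : IsCoprime (z.coeff a) p) (hdvd : ∀ j ≠ a, p ∣ z.coeff j) {x : R}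
    (hx : x * p = 1) : ∃ f : ℤ[T;T⁻¹], f.smeval A = x := by
  obtain ⟨y, hy⟩ := exists_eq_C_mul_X_pow_add_C_mul hdvd
  obtain ⟨u, v, huv⟩ := hcop
  have hpx : p • x = 1 := by rw [zsmul_eq_mul, Int.cast_comm, hx]
  have hpy : (p : R) * aeval (A : R) y = -(z.coeff a * (A : R) ^ a) := by
    rw [hy, map_add, map_mul, map_mul, aeval_C, aeval_C, aeval_X_pow] at hz
    exact eq_neg_of_add_eq_zero_right hz
  have hyA : aeval (A : R) y * ↑(A ^ (-(a : ℤ))) = -(z.coeff a • x) := by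
    calc aeval (A : R) y * ↑(A ^ (-(a : ℤ)))
        = x * (p * aeval (A : R) y) * ↑(A ^ (-(a : ℤ))) := by rw [← mul_assoc, hx, one_mul]
      _ = -(z.coeff a • x) * ↑(A ^ (a : ℤ) * A ^ (-(a : ℤ))) := by
        rw [hpy, zpow_natCast, Units.val_mul, Units.val_pow_eq_pow_val, mul_neg, neg_mul,
          ← mul_assoc, ← Int.cast_comm, zsmul_eq_mul, neg_mul, mul_assoc]
      _ = -(z.coeff a • x) := by rw [← zpow_add, add_neg_cancel, zpow_zero, Units.val_one, mul_one]
  refine ⟨.C v - .C u * (toLaurent y * .T (-a)), ?_⟩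
  rw [← LaurentPolynomial.leval_apply ℤ, map_sub, LaurentPolynomial.leval_apply,
    LaurentPolynomial.leval_apply, LaurentPolynomial.smeval_C, LaurentPolynomial.smeval_C_mul,
    LaurentPolynomial.smeval_toLaurent_mul_T, hyA]
  calc v • (1 : R) - u • -(z.coeff a • x) = (u * z.coeff a + v * p) • x := by
        rw [add_smul, mul_smul, mul_smul, hpx, smul_neg, sub_neg_eq_add, add_comm]
    _ = x := by rw [huv, one_smul]

end Laurent

/-- The embedding `ℚ̄ ↪ ℂ_p` is recorded by the nonarchimedean absolute value `w` it induces on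
`ℚ̄`, and a Laurent polynomial `∑ i, c_i t^i ∈ ℤ[t^{±1}]` by its coefficients `c : ℤ →₀ ℤ`. -/
theorem exists_laurent_poly_eval_eq_inv_p_smul_one
    (S : Finset ℕ) (hS : ∀ l ∈ S, l.Prime) (p : ℕ) (hpS : p ∈ S) (m : ℕ)
    (A : (Matrix (Fin m) (Fin m) (ZinvS S))ˣ)
    (w : AlgebraicClosure ℚ → ℝ)
    (hw_nonneg : ∀ x, 0 ≤ w x)
    (hw_mul : ∀ x y, w (x * y) = w x * w y)
    (hw_add : ∀ x y, w (x + y) ≤ max (w x) (w y))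
    (hw_rat : ∀ q : ℚ, w (algebraMap ℚ (AlgebraicClosure ℚ) q) = (padicNorm p q : ℝ))
    (heig : ∀ x : AlgebraicClosure ℚ,
      ((A.val.map fun a => algebraMap ℚ (AlgebraicClosure ℚ) (a : ℚ)).charpoly).IsRoot x →
      w x ≠ 1) :
    ∃ c : ℤ →₀ ℤ,
      (c.sum fun i a => a • ((A ^ i : (Matrix (Fin m) (Fin m) (ZinvS S))ˣ) : Matrix (Fin m) (Fin m) (ZinvS S))) =
        Matrix.scalar (Fin m)
          (⟨(p : ℚ)⁻¹, Subring.subset_closure ⟨p, hpS, rfl⟩⟩ : ZinvS S) := by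
  have hp : Fact p.Prime := ⟨hS p hpS⟩
  set Φ := (ZinvS S).subtype.mapMatrix (m := Fin m)
  obtain ⟨a, ha⟩ := exists_hasDominantCoeff_charpoly (algebraMap ℚ (AlgebraicClosure ℚ))
    (v := .ofIsNonarchimedean hw_add hw_nonneg hw_mul (by simpa using hw_rat 0)
      (by simpa using hw_rat 1))
    hw_add (v' := Rat.AbsoluteValue.padic p) hw_rat (Φ A)
    (by rw [RingHom.mapMatrix_apply, Matrix.map_map]; exact heig)
  obtain ⟨z, c, hzc, hcop, hdvd⟩ := exists_int_polynomial_of_hasDominantCoeff ha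
  -- Cayley–Hamilton over `ℚ`, pulled back along the injective `Φ`.
  have hz : aeval A.val z = 0 := by
    refine Matrix.map_injective Subtype.val_injective ?_
    change Φ.toIntAlgHom (aeval A.val z) = Φ.toIntAlgHom 0
    rw [← aeval_algHom_apply, map_zero, ← aeval_map_algebraMap ℚ, algebraMap_int_eq, hzc,
      map_mul, RingHom.toIntAlgHom_apply, Matrix.aeval_self_charpoly, mul_zero]
  set x : Matrix (Fin m) (Fin m) (ZinvS S) :=
    Matrix.scalar (Fin m) ⟨(p : ℚ)⁻¹, Subring.subset_closure ⟨p, hpS, rfl⟩⟩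
  have hx : x * (p : ℤ) = 1 := by
    rw [← map_intCast (Matrix.scalar (Fin m) : ZinvS S →+* _), ← map_mul,
      ← map_one (Matrix.scalar (Fin m) : ZinvS S →+* _)]
    congr 1
    ext
    simp [hp.out.ne_zero]
  obtain ⟨f, hf⟩ := exists_smeval_eq_inv_of_aeval_eq_zero A hz hcop hdvd hx
  exact ⟨f.coeff, hf⟩
end
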